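/- Let π : H → L be the nearest point projection onto the F-line L and suppose cosh d(y,z) = cosh d(y,πz)·cosh d(πz,z) holds for all y ∈ L, z ∈ H. Let c be a unit speed geodesic in L. Then for each t ∈ ℝ and every s > 0, the bisector of c(t−s) and c(t+s) equals π⁻¹(N̄_t), where N̄_t is the set of points of L equidistant from c(t−s) and c(t+s); in particular this bisector does not depend on s > 0. -/

import Mathlib

/-!
On `L` the distances to `c (t - s)` and `c (t + s)` are read off the hyperboloid model: the
chart turns `c` into `u ↦ cosh (u - t) • p + sinh (u - t) • q` with `p = f (c t)` and `q` a unit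
tangent vector, so `cosh d(y, c (t ∓ s)) = -cosh s ⟪f y, p⟫ ± sinh s ⟪f y, q⟫` with
`⟪·, ·⟫ = minkB n`. Hence for every `s > 0` the points of `L` equidistant from `c (t - s)` and
`c (t + s)` form the hyperplane section `⟪f y, q⟫ = 0`. Off `L`, the product formula multiplies
`cosh d(c u, x)` by the factor `cosh d(π x, x) > 0`, which does not depend on `u`, so `x` is
equidistant from `c (t - s)` and `c (t + s)` exactly when `π x` is.
-/

/-- The Minkowski bilinear form on `ℝ^{n+1}`, used for the hyperboloid model of real
hyperbolic `n`-space. -/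
def minkB (n : ℕ) (x y : Fin (n + 1) → ℝ) : ℝ :=
  (∑ i : Fin n, x i.castSucc * y i.castSucc) - x (Fin.last n) * y (Fin.last n)

section Minkowski

variable {n : ℕ}

lemma minkB_symm (x y : Fin (n + 1) → ℝ) : minkB n x y = minkB n y x := by
  simp [minkB, mul_comm]

lemma minkB_add_left (x y z : Fin (n + 1) → ℝ) :
    minkB n (x + y) z = minkB n x z + minkB n y z := by
  simp only [minkB, Pi.add_apply, add_mul, Finset.sum_add_distrib]; ring

lemma minkB_sub_left (x y z : Fin (n + 1) → ℝ) :
    minkB n (x - y) z = minkB n x z - minkB n y z := by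
  simp only [minkB, Pi.sub_apply, sub_mul, Finset.sum_sub_distrib]; ring

lemma minkB_smul_left (a : ℝ) (x y : Fin (n + 1) → ℝ) :
    minkB n (a • x) y = a * minkB n x y := by
  simp [minkB, Finset.mul_sum, mul_assoc, mul_sub]

lemma minkB_add_right (x y z : Fin (n + 1) → ℝ) :
    minkB n x (y + z) = minkB n x y + minkB n x z := by
  rw [minkB_symm, minkB_add_left, minkB_symm y, minkB_symm z]

lemma minkB_sub_right (x y z : Fin (n + 1) → ℝ) :
    minkB n x (y - z) = minkB n x y - minkB n x z := by
  rw [minkB_symm, minkB_sub_left, minkB_symm y, minkB_symm z]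

lemma minkB_smul_right (a : ℝ) (x y : Fin (n + 1) → ℝ) :
    minkB n x (a • y) = a * minkB n x y := by
  rw [minkB_symm, minkB_smul_left, minkB_symm]

/-- Cauchy–Schwarz on the first `n` coordinates: the orthogonal complement of a timelike vector
is spacelike. -/
lemma eq_zero_of_minkB_self_eq_zero_of_minkB_eq_zero {p w : Fin (n + 1) → ℝ}
    (hp : minkB n p p = -1) (hwp : minkB n w p = 0) (hww : minkB n w w = 0) : w = 0 := by
  simp only [minkB, ← sq] at hp hww
  simp only [minkB] at hwp
  have hP : ∑ i : Fin n, p i.castSucc ^ 2 = p (Fin.last n) ^ 2 - 1 := by linarith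
  have hW : ∑ i : Fin n, w i.castSucc ^ 2 = w (Fin.last n) ^ 2 := by linarith
  have hWP : ∑ i : Fin n, w i.castSucc * p i.castSucc = w (Fin.last n) * p (Fin.last n) := by
    linarith
  have hcs := Finset.sum_mul_sq_le_sq_mul_sq Finset.univ
    (fun i : Fin n => w i.castSucc) (fun i : Fin n => p i.castSucc)
  rw [hWP, hW, hP, mul_pow] at hcs
  have hlast : w (Fin.last n) = 0 := by nlinarith
  have hinit (i : Fin n) : w i.castSucc = 0 := by
    rw [hlast, zero_pow two_ne_zero, Finset.sum_eq_zero_iff_of_nonneg fun _ _ => sq_nonneg _]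
      at hW
    exact pow_eq_zero_iff two_ne_zero |>.mp (hW i (Finset.mem_univ i))
  funext j
  exact Fin.lastCases hlast hinit j

end Minkowski

section HyperboloidGeodesic

open Real

variable {n : ℕ} {g : ℝ → Fin (n + 1) → ℝ}

/-- The unit vector `q ⊥ g t` with `g (t + 1) = cosh 1 • g t + sinh 1 • q`. -/
noncomputable def geodesicTangent (g : ℝ → Fin (n + 1) → ℝ) (t : ℝ) : Fin (n + 1) → ℝ :=
  (sinh 1)⁻¹ • (g (t + 1) - cosh 1 • g t)

lemma minkB_geodesicTangent (hg : ∀ a b, minkB n (g a) (g b) = -cosh (a - b)) (t u : ℝ) :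
    minkB n (g u) (geodesicTangent g t) = sinh (u - t) := by
  have hsinh : sinh 1 ≠ 0 := (sinh_pos_iff.mpr one_pos).ne'
  rw [geodesicTangent, minkB_smul_right, minkB_sub_right, minkB_smul_right, hg, hg,
    show u - (t + 1) = (u - t) - 1 by ring, cosh_sub]
  field_simp
  ring

lemma minkB_geodesicTangent_self (hg : ∀ a b, minkB n (g a) (g b) = -cosh (a - b)) (t : ℝ) :
    minkB n (geodesicTangent g t) (geodesicTangent g t) = 1 := by
  have hsinh : sinh 1 ≠ 0 := (sinh_pos_iff.mpr one_pos).ne'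
  nth_rw 1 [geodesicTangent]
  rw [minkB_smul_left, minkB_sub_left, minkB_smul_left, minkB_geodesicTangent hg,
    minkB_geodesicTangent hg, add_sub_cancel_left, sub_self, sinh_zero]
  field_simp
  ring

lemma eq_cosh_smul_add_sinh_smul_geodesicTangent
    (hg : ∀ a b, minkB n (g a) (g b) = -cosh (a - b)) (t u : ℝ) :
    g u = cosh (u - t) • g t + sinh (u - t) • geodesicTangent g t := by
  set q := geodesicTangent g t
  set w := g u - (cosh (u - t) • g t + sinh (u - t) • q) with hw
  have hpp : minkB n (g t) (g t) = -1 := by rw [hg, sub_self, cosh_zero]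
  have hqp : minkB n q (g t) = 0 := by
    rw [minkB_symm, minkB_geodesicTangent hg, sub_self, sinh_zero]
  have hwp : minkB n w (g t) = 0 := by
    rw [minkB_sub_left, minkB_add_left, minkB_smul_left, minkB_smul_left, hg, hpp, hqp]
    ring
  have hwq : minkB n w q = 0 := by
    rw [minkB_sub_left, minkB_add_left, minkB_smul_left, minkB_smul_left,
      minkB_geodesicTangent hg, minkB_geodesicTangent_self hg, minkB_geodesicTangent hg,
      sub_self, sinh_zero]
    ring
  have hwu : minkB n w (g u) = 0 := by
    rw [minkB_sub_left, minkB_add_left, minkB_smul_left, minkB_smul_left, hg, hg,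
      minkB_symm q, minkB_geodesicTangent hg, sub_self, cosh_zero, ← neg_sub u t, cosh_neg]
    linear_combination cosh_sq_sub_sinh_sq (u - t)
  have hww : minkB n w w = 0 := by
    nth_rw 2 [hw]
    rw [minkB_sub_right, minkB_add_right, minkB_smul_right, minkB_smul_right, hwu, hwp, hwq]
    ring
  exact sub_eq_zero.mp (eq_zero_of_minkB_self_eq_zero_of_minkB_eq_zero hpp hwp hww)

lemma sub_eq_two_sinh_smul_geodesicTangent
    (hg : ∀ a b, minkB n (g a) (g b) = -cosh (a - b)) (t s : ℝ) :
    g (t + s) - g (t - s) = (2 * sinh s) • geodesicTangent g t := by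
  rw [eq_cosh_smul_add_sinh_smul_geodesicTangent hg t (t + s),
    eq_cosh_smul_add_sinh_smul_geodesicTangent hg t (t - s), add_sub_cancel_left,
    sub_sub_cancel_left, cosh_neg, sinh_neg, two_mul, add_smul, neg_smul]
  abel

end HyperboloidGeodesic

lemma Real.cosh_dist_eq_cosh_dist_iff {X : Type*} [PseudoMetricSpace X] {a b c d : X} :
    cosh (dist a b) = cosh (dist c d) ↔ dist a b = dist c d :=
  ⟨fun h => cosh_injOn dist_nonneg dist_nonneg h, congrArg cosh⟩

section Bisector

variable {H : Type*} [MetricSpace H] {L : Set H}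

lemma dist_eq_dist_iff_of_cosh_dist_eq_mul {π : H → H}
    (hcosh : ∀ y ∈ L, ∀ z : H,
      Real.cosh (dist y z) = Real.cosh (dist y (π z)) * Real.cosh (dist (π z) z))
    {y₁ y₂ : H} (hy₁ : y₁ ∈ L) (hy₂ : y₂ ∈ L) (x : H) :
    dist x y₁ = dist x y₂ ↔ dist (π x) y₁ = dist (π x) y₂ := by
  rw [dist_comm x, dist_comm x, dist_comm (π x), dist_comm (π x),
    ← Real.cosh_dist_eq_cosh_dist_iff, ← Real.cosh_dist_eq_cosh_dist_iff, hcosh y₁ hy₁,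
    hcosh y₂ hy₂]
  exact mul_left_inj' (Real.cosh_pos _).ne'

lemma dist_eq_dist_iff_minkB_geodesicTangent_eq_zero {n : ℕ} {f : H → Fin (n + 1) → ℝ}
    (hf : ∀ x ∈ L, ∀ y ∈ L, Real.cosh (dist x y) = -(minkB n (f x) (f y)))
    {c : ℝ → H} (hcL : ∀ t, c t ∈ L) (hgeo : ∀ a b : ℝ, dist (c a) (c b) = |a - b|)
    (t : ℝ) {s : ℝ} (hs : 0 < s) {y : H} (hy : y ∈ L) :
    dist y (c (t - s)) = dist y (c (t + s)) ↔
      minkB n (f y) (geodesicTangent (f ∘ c) t) = 0 := by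
  have hfc (a b : ℝ) : minkB n ((f ∘ c) a) ((f ∘ c) b) = -Real.cosh (a - b) := by
    rw [← Real.cosh_abs, ← hgeo, hf _ (hcL a) _ (hcL b), neg_neg, Function.comp_apply,
      Function.comp_apply]
  have hchord := sub_eq_two_sinh_smul_geodesicTangent hfc t s
  rw [Function.comp_apply, Function.comp_apply] at hchord
  rw [← Real.cosh_dist_eq_cosh_dist_iff, hf y hy _ (hcL _), hf y hy _ (hcL _), neg_inj,
    eq_comm, ← sub_eq_zero, ← minkB_sub_right, hchord, minkB_smul_right, mul_eq_zero,
    or_iff_right (mul_ne_zero two_ne_zero (Real.sinh_pos_iff.mpr hs).ne')]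

end Bisector

theorem bisector_of_geodesic_points_general {H : Type*} [MetricSpace H]
    (L : Set H) (π : H → H)
    (hπL : ∀ w : H, π w ∈ L)
    (hcosh : ∀ y ∈ L, ∀ z : H,
      Real.cosh (dist y z) = Real.cosh (dist y (π z)) * Real.cosh (dist (π z) z))
    (c : ℝ → H) (hcL : ∀ t, c t ∈ L)
    (hgeo : ∀ a b : ℝ, dist (c a) (c b) = |a - b|)
    -- `L` is isometric to a real hyperbolic space (hyperboloid model chart `f`):
    (n : ℕ) (f : H → (Fin (n + 1) → ℝ))
    (hf2 : ∀ x ∈ L, ∀ y ∈ L, Real.cosh (dist x y) = -(minkB n (f x) (f y))) :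
    (∀ t s : ℝ, 0 < s →
      {x : H | dist x (c (t - s)) = dist x (c (t + s))}
        = π ⁻¹' {x : H | x ∈ L ∧ dist x (c (t - s)) = dist x (c (t + s))})
    ∧ ∀ t s s' : ℝ, 0 < s → 0 < s' →
      {x : H | dist x (c (t - s)) = dist x (c (t + s))}
        = {x : H | dist x (c (t - s')) = dist x (c (t + s'))} := by
  have hproj (x : H) (u v : ℝ) :=
    dist_eq_dist_iff_of_cosh_dist_eq_mul hcosh (hcL u) (hcL v) x
  refine ⟨fun t s _ => ?_, fun t s s' hs hs' => ?_⟩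
  · ext x
    simp only [Set.mem_ofPred_eq, Set.mem_preimage, hproj x, hπL x, true_and]
  · ext x
    rw [Set.mem_ofPred_eq, Set.mem_ofPred_eq, hproj x (t - s), hproj x (t - s'),
      dist_eq_dist_iff_minkB_geodesicTangent_eq_zero hf2 hcL hgeo t hs (hπL x),
      dist_eq_dist_iff_minkB_geodesicTangent_eq_zero hf2 hcL hgeo t hs' (hπL x)]

/-- Let `π : H → L` be the nearest point projection onto the `F`-line `L`
(a subset isometric to a real hyperbolic space, encoded by the hyperboloid chart `f`),
satisfying `cosh d(y,z) = cosh d(y,πz) · cosh d(πz,z)` for all `y ∈ L`, `z ∈ H`.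
Let `c` be a unit speed geodesic in `L`. Then for each `t ∈ ℝ` and every `s > 0`, the
bisector of `c(t−s)` and `c(t+s)` equals `π⁻¹(N̄_t)`, where `N̄_t` is the set of points
of `L` equidistant from `c(t−s)` and `c(t+s)`; in particular this bisector does not
depend on `s > 0`. -/
theorem bisector_of_geodesic_points {H : Type*} [MetricSpace H]
    (L : Set H) (π : H → H)
    (hπL : ∀ w : H, π w ∈ L)
    (hcosh : ∀ y ∈ L, ∀ z : H,
      Real.cosh (dist y z) = Real.cosh (dist y (π z)) * Real.cosh (dist (π z) z))
    (c : ℝ → H) (hcL : ∀ t, c t ∈ L)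
    (hgeo : ∀ a b : ℝ, dist (c a) (c b) = |a - b|)
    -- `L` is isometric to a real hyperbolic space (hyperboloid model chart `f`):
    (n : ℕ) (f : H → (Fin (n + 1) → ℝ))
    (hf1 : ∀ x ∈ L, minkB n (f x) (f x) = -1 ∧ 0 < f x (Fin.last n))
    (hf2 : ∀ x ∈ L, ∀ y ∈ L, Real.cosh (dist x y) = -(minkB n (f x) (f y)))
    (hf3 : ∀ v : Fin (n + 1) → ℝ, minkB n v v = -1 → 0 < v (Fin.last n) →
      ∃ x ∈ L, f x = v) :
    (∀ t s : ℝ, 0 < s →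
      {x : H | dist x (c (t - s)) = dist x (c (t + s))}
        = π ⁻¹' {x : H | x ∈ L ∧ dist x (c (t - s)) = dist x (c (t + s))})
    ∧ ∀ t s s' : ℝ, 0 < s → 0 < s' →
      {x : H | dist x (c (t - s)) = dist x (c (t + s))}
        = {x : H | dist x (c (t - s')) = dist x (c (t + s'))} :=
  bisector_of_geodesic_points_general L π hπL hcosh c hcL hgeo n f hf2
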